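/- arXiv:1910.14204 — 6 statements merged into one kernel-verified Lean document; each statement's English description precedes it below -/
import Mathlib

section
/- Let 0 < α < 1, T > 0, and let M₁, M₂ > 0 satisfy M₁/(1+z) ≤ E_{α,1}(−z) ≤ M₂/(1+z) for all real z ≥ 0. Then for every t ∈ [0,T], every s ∈ (0,T], and every square-summable family g = (g_j)_{j ∈ J_d} of reals, ∑_{j ∈ J_d} ( E_{α,1}(−λ_j t^α) · E_{α,1}(−λ_j s^α) / E_{α,1}(−λ_j T^α) )² g_j² ≤ ( M₂² T^α / (M₁ s^α) )² ∑_{j ∈ J_d} g_j². -/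
/-- The Mittag-Leffler function `E_{a,b}(z) = ∑_{i=0}^∞ z^i / Γ(a i + b)`. -/
noncomputable def mittagLeffler (a b z : ℝ) : ℝ :=
  ∑' i : ℕ, z ^ i / Real.Gamma (a * i + b)

/-- `λ_j = j_1² + ⋯ + j_d²` for a multi-index `j` of positive integers. -/
def lamMulti {d : ℕ} (j : Fin d → ℕ+) : ℝ := ∑ i, ((j i : ℕ) : ℝ) ^ 2

/-
Two-sided bounds `M₁ / (1 + z) ≤ E_{α,1}(-z) ≤ M₂ / (1 + z)` give, for `z = λ_j`,
`E(-z tᵅ) E(-z sᵅ) / E(-z Tᵅ) ≤ (M₂² / M₁) (1 + z Tᵅ) / (1 + z sᵅ)`, and the last quotient is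
at most `Tᵅ / sᵅ` uniformly in `z ≥ 0`. The weighted series is then dominated termwise by
`(M₂² Tᵅ / (M₁ sᵅ))² g_j²`.
-/

lemma lamMulti_nonneg {d : ℕ} (j : Fin d → ℕ+) : 0 ≤ lamMulti j := by
  unfold lamMulti
  positivity

lemma one_add_mul_div_one_add_mul_le {x y z : ℝ} (hz : 0 ≤ z) (hx : 0 < x) (hxy : x ≤ y) :
    (1 + z * y) / (1 + z * x) ≤ y / x := by
  rw [div_le_div_iff₀ (by positivity) hx]
  nlinarith

lemma tsum_sq_mul_sq_le {ι : Type*} (f g : ι → ℝ) {C : ℝ} (hf : ∀ j, |f j| ≤ C)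
    (hg : Summable fun j => g j ^ 2) :
    ∑' j, f j ^ 2 * g j ^ 2 ≤ C ^ 2 * ∑' j, g j ^ 2 := by
  have hle : ∀ j, f j ^ 2 * g j ^ 2 ≤ C ^ 2 * g j ^ 2 := fun j => by
    refine mul_le_mul_of_nonneg_right ?_ (sq_nonneg _)
    rw [← sq_abs]
    exact pow_le_pow_left₀ (abs_nonneg _) (hf j) 2
  have hCg : Summable fun j => C ^ 2 * g j ^ 2 := hg.mul_left _
  rw [← tsum_mul_left]
  exact (hCg.of_nonneg_of_le (fun j => by positivity) hle).tsum_le_tsum hle hCg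

section TwoSidedBounds

variable {E : ℝ → ℝ} {M₁ M₂ : ℝ}
  (hE : ∀ z, 0 ≤ z → M₁ / (1 + z) ≤ E (-z) ∧ E (-z) ≤ M₂ / (1 + z))
include hE

lemma pos_of_two_sided_bounds (hM₁ : 0 < M₁) {z : ℝ} (hz : 0 ≤ z) : 0 < E (-z) :=
  (div_pos hM₁ (by positivity)).trans_le (hE z hz).1

lemma abs_mul_div_le_of_two_sided_bounds (hM₁ : 0 < M₁) (hM₂ : 0 ≤ M₂) {a b c : ℝ}
    (ha : 0 ≤ a) (hb : 0 ≤ b) (hc : 0 ≤ c) :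
    |E (-a) * E (-b) / E (-c)| ≤ M₂ ^ 2 / M₁ * ((1 + c) / (1 + b)) := by
  have hEa := pos_of_two_sided_bounds hE hM₁ ha
  have hEb := pos_of_two_sided_bounds hE hM₁ hb
  have hEc := pos_of_two_sided_bounds hE hM₁ hc
  rw [abs_of_pos (by positivity)]
  have hEa_le : E (-a) ≤ M₂ :=
    (hE a ha).2.trans (div_le_self hM₂ (by linarith))
  have hEc_inv : (E (-c))⁻¹ ≤ (1 + c) / M₁ := by
    rw [← inv_div]
    exact inv_anti₀ (by positivity) (hE c hc).1
  calc E (-a) * E (-b) / E (-c) = E (-a) * E (-b) * (E (-c))⁻¹ := div_eq_mul_inv _ _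
    _ ≤ M₂ * (M₂ / (1 + b)) * ((1 + c) / M₁) := by
        gcongr
        exact (hE b hb).2
    _ = M₂ ^ 2 / M₁ * ((1 + c) / (1 + b)) := by ring

end TwoSidedBounds

theorem stmt_2_general (d : ℕ) (α T M₁ M₂ : ℝ)
    (hα0 : 0 < α) (hM₁ : 0 < M₁) (hM₂ : 0 < M₂)
    (hML : ∀ z : ℝ, 0 ≤ z →
      M₁ / (1 + z) ≤ mittagLeffler α 1 (-z) ∧ mittagLeffler α 1 (-z) ≤ M₂ / (1 + z))
    (t : ℝ) (ht : t ∈ Set.Icc 0 T) (s : ℝ) (hs : s ∈ Set.Ioc 0 T)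
    (g : (Fin d → ℕ+) → ℝ) (hg : Summable fun j => (g j) ^ 2) :
    ∑' j : Fin d → ℕ+,
        (mittagLeffler α 1 (-(lamMulti j * t ^ α)) *
          mittagLeffler α 1 (-(lamMulti j * s ^ α)) /
          mittagLeffler α 1 (-(lamMulti j * T ^ α))) ^ 2 * (g j) ^ 2
      ≤ (M₂ ^ 2 * T ^ α / (M₁ * s ^ α)) ^ 2 * ∑' j : Fin d → ℕ+, (g j) ^ 2 := by
  have hsα : 0 < s ^ α := Real.rpow_pos_of_pos hs.1 α
  have hsTα : s ^ α ≤ T ^ α := Real.rpow_le_rpow hs.1.le hs.2 hα0.le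
  refine tsum_sq_mul_sq_le _ g (fun j => ?_) hg
  have hz := lamMulti_nonneg j
  calc _ ≤ M₂ ^ 2 / M₁ * ((1 + lamMulti j * T ^ α) / (1 + lamMulti j * s ^ α)) :=
        abs_mul_div_le_of_two_sided_bounds hML hM₁ hM₂.le
          (mul_nonneg hz (Real.rpow_nonneg ht.1 α)) (mul_nonneg hz hsα.le)
          (mul_nonneg hz (hsα.le.trans hsTα))
    _ ≤ M₂ ^ 2 / M₁ * (T ^ α / s ^ α) :=
        mul_le_mul_of_nonneg_left (one_add_mul_div_one_add_mul_le hz hsα hsTα) (by positivity)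
    _ = M₂ ^ 2 * T ^ α / (M₁ * s ^ α) := by ring

theorem stmt_2 (d : ℕ) (hd : 1 ≤ d) (α T M₁ M₂ : ℝ)
    (hα0 : 0 < α) (hα1 : α < 1) (hT : 0 < T) (hM₁ : 0 < M₁) (hM₂ : 0 < M₂)
    (hML : ∀ z : ℝ, 0 ≤ z →
      M₁ / (1 + z) ≤ mittagLeffler α 1 (-z) ∧ mittagLeffler α 1 (-z) ≤ M₂ / (1 + z))
    (t : ℝ) (ht : t ∈ Set.Icc 0 T) (s : ℝ) (hs : s ∈ Set.Ioc 0 T)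
    (g : (Fin d → ℕ+) → ℝ) (hg : Summable fun j => (g j) ^ 2) :
    ∑' j : Fin d → ℕ+,
        (mittagLeffler α 1 (-(lamMulti j * t ^ α)) *
          mittagLeffler α 1 (-(lamMulti j * s ^ α)) /
          mittagLeffler α 1 (-(lamMulti j * T ^ α))) ^ 2 * (g j) ^ 2
      ≤ (M₂ ^ 2 * T ^ α / (M₁ * s ^ α)) ^ 2 * ∑' j : Fin d → ℕ+, (g j) ^ 2 :=
  stmt_2_general d α T M₁ M₂ hα0 hM₁ hM₂ hML t ht s hs g hg
end

section
/- Let n₁, n₂ ≥ 1, 1 ≤ m₁ < n₁, 1 ≤ m₂ < n₂ and j₁, j₂ ≥ 1 be integers, and set C = ∑_{k₁=1}^{n₁} ∑_{k₂=1}^{n₂} ξ_{j₁,j₂}(x_{k₁,k₂}) ξ_{m₁,m₂}(x_{k₁,k₂}). If there exist integers l₁, l₂ ≥ 0 and signs ε₁, ε₂ ∈ {+1, −1} such that j₁ = 2l₁n₁ + ε₁m₁ and j₂ = 2l₂n₂ + ε₂m₂, then C = ε₁ ε₂ (−1)^{l₁+l₂} n₁ n₂ / π²; otherwise C = 0. (Since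 1 ≤ m_i < n_i, the representation j_i = 2l_in_i + ε_im_i is unique when it exists.) -/
open Real

/-- Dirichlet eigenfunction `ξ_{j₁,j₂}(x₁,x₂) = (2/π) sin(j₁x₁) sin(j₂x₂)` on `(0,π)²`. -/
noncomputable def xi2 (j₁ j₂ : ℕ) (x₁ x₂ : ℝ) : ℝ :=
  (2 / π) * Real.sin (j₁ * x₁) * Real.sin (j₂ * x₂)

/-- Midpoint grid point in one coordinate: `(2k−1)π/(2n)`. -/
noncomputable def gridPt (n k : ℕ) : ℝ := (2 * (k : ℝ) - 1) * π / (2 * n)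

/-!
The double sum factors into `4 / π²` times two one-dimensional sums `∑ₖ sin (j xₖ) sin (m xₖ)`,
and product-to-sum turns each into half the difference of the cosine sums `∑ₖ cos (t xₖ)` at
`t = j - m` and `t = j + m`. Multiplying such a cosine sum by `2 sin (tπ / 2n)` telescopes it to
`sin (tπ) = 0`, so it vanishes unless `2n ∣ t`, while for `t = 2nu` every term equals `(-1)ᵘ`.
Since `0 < m < n`, at most one of `j - m`, `j + m` is divisible by `2n`, and one of them is (with
nonnegative quotient `l`) exactly when `j = 2ln ± m`.
-/

noncomputable def cosGridSum (n : ℕ) (t : ℝ) : ℝ :=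
  ∑ k ∈ Finset.Icc 1 n, cos (t * gridPt n k)

noncomputable def sinGridSum (n j m : ℕ) : ℝ :=
  ∑ k ∈ Finset.Icc 1 n, sin (j * gridPt n k) * sin (m * gridPt n k)

lemma two_mul_sin_mul_cosGridSum {n : ℕ} (hn : n ≠ 0) (t : ℝ) :
    2 * sin (t * π / (2 * n)) * cosGridSum n t = sin (t * π) := by
  have hn' : (n : ℝ) ≠ 0 := Nat.cast_ne_zero.mpr hn
  have step (i : ℕ) : 2 * sin (t * π / (2 * n)) * cos (t * gridPt n (1 + i)) =
      sin (t * (i + 1 : ℕ) * π / n) - sin (t * i * π / n) := by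
    have half_diff : (t * (i + 1 : ℕ) * π / n - t * i * π / n) / 2 = t * π / (2 * n) := by
      push_cast; field_simp; ring
    have half_sum : (t * (i + 1 : ℕ) * π / n + t * i * π / n) / 2 = t * gridPt n (1 + i) := by
      rw [gridPt]; push_cast; field_simp; ring
    rw [sin_sub_sin, half_diff, half_sum]
  rw [cosGridSum, Finset.mul_sum, ← Finset.Ico_add_one_right_eq_Icc, Finset.sum_Ico_eq_sum_range,
    Nat.add_sub_cancel]
  simp only [step]
  rw [Finset.sum_range_sub (fun i : ℕ => sin (t * i * π / n))]
  field_simp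
  simp

lemma cosGridSum_eq_zero {n : ℕ} (hn : n ≠ 0) {t : ℤ} (ht : ¬ 2 * (n : ℤ) ∣ t) :
    cosGridSum n t = 0 := by
  have hsin : sin (t * π / (2 * n)) ≠ 0 := by
    rw [Ne, sin_eq_zero_iff]
    rintro ⟨u, hu⟩
    have hn' : (n : ℝ) ≠ 0 := Nat.cast_ne_zero.mpr hn
    refine ht ⟨u, ?_⟩
    field_simp at hu
    exact_mod_cast (by linear_combination -hu : (t : ℝ) = 2 * n * u)
  have h := two_mul_sin_mul_cosGridSum hn t
  rw [sin_int_mul_pi] at h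
  simpa [hsin] using h

lemma cosGridSum_two_mul_mul (n : ℕ) (u : ℤ) :
    cosGridSum n (2 * n * u) = n * (-1) ^ u := by
  rcases Nat.eq_zero_or_pos n with rfl | hn
  · simp [cosGridSum]
  have hn' : (n : ℝ) ≠ 0 := by positivity
  have term (k : ℕ) : cos (2 * n * u * gridPt n k) = (-1) ^ u := by
    have : 2 * n * u * gridPt n k = (u * k : ℤ) * (2 * π) - u * π := by
      rw [gridPt]; push_cast; field_simp
    rw [this, cos_int_mul_two_pi_sub, cos_int_mul_pi]
  simp [cosGridSum, term]

lemma sinGridSum_eq_cosGridSum_sub (n j m : ℕ) :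
    sinGridSum n j m = (cosGridSum n ((j - m : ℤ) : ℝ) - cosGridSum n ((j + m : ℤ) : ℝ)) / 2 := by
  rw [sinGridSum, cosGridSum, cosGridSum, ← Finset.sum_sub_distrib, Finset.sum_div]
  refine Finset.sum_congr rfl fun k _ => ?_
  push_cast
  rw [sub_mul, add_mul, ← two_mul_sin_mul_sin]
  ring

lemma not_two_mul_dvd_two_mul_mul_add {n m : ℤ} (l : ℤ) (hm : 0 < |m|) (hmn : |m| < n) :
    ¬ 2 * n ∣ 2 * n * l + 2 * m := by
  rw [dvd_add_right (dvd_mul_right _ _)]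
  intro h
  have h2m := Int.eq_zero_of_abs_lt_dvd h (by rw [abs_mul]; norm_num; linarith)
  exact abs_pos.mp hm (by omega)

lemma exists_nat_eq_mul_of_dvd {d a : ℤ} (hd : 0 < d) (hda : d ∣ a) (ha : -d < a) :
    ∃ l : ℕ, a = d * l := by
  obtain ⟨c, rfl⟩ := hda
  lift c to ℕ using by nlinarith
  exact ⟨c, rfl⟩

lemma sinGridSum_of_eq {n m j l : ℕ} {e : ℤ} (hm : 0 < m) (hmn : m < n)
    (he : e = 1 ∨ e = -1) (hj : (j : ℤ) = 2 * l * n + e * m) :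
    sinGridSum n j m = e * (-1) ^ l * n / 2 := by
  have hn : n ≠ 0 := by omega
  have hdvd : cosGridSum n ((2 * n * l : ℤ) : ℝ) = n * (-1) ^ l := by
    push_cast
    simpa using cosGridSum_two_mul_mul n l
  have hndvd (m' : ℤ) (hm' : |m'| = m) : cosGridSum n ((2 * n * l + 2 * m' : ℤ) : ℝ) = 0 :=
    cosGridSum_eq_zero hn <| not_two_mul_dvd_two_mul_mul_add l
      (by rw [hm']; exact_mod_cast hm) (by rw [hm']; exact_mod_cast hmn)
  rw [sinGridSum_eq_cosGridSum_sub]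
  rcases he with rfl | rfl
  · rw [show (j - m : ℤ) = 2 * n * l by linear_combination hj,
      show (j + m : ℤ) = 2 * n * l + 2 * m by linear_combination hj, hdvd, hndvd m (by simp)]
    ring
  · rw [show (j - m : ℤ) = 2 * n * l + 2 * -m by linear_combination hj,
      show (j + m : ℤ) = 2 * n * l by linear_combination hj, hdvd, hndvd (-m) (by simp)]
    ring

lemma sinGridSum_eq_zero {n m j : ℕ} (hmn : m < n)
    (h : ¬ ∃ (l : ℕ) (e : ℤ), (e = 1 ∨ e = -1) ∧ (j : ℤ) = 2 * l * n + e * m) :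
    sinGridSum n j m = 0 := by
  have hn : n ≠ 0 := by omega
  have hsub : ¬ 2 * (n : ℤ) ∣ j - m := fun hd => by
    obtain ⟨l, hl⟩ := exists_nat_eq_mul_of_dvd (by omega) hd (by omega)
    exact h ⟨l, 1, Or.inl rfl, by linear_combination hl⟩
  have hadd : ¬ 2 * (n : ℤ) ∣ j + m := fun hd => by
    obtain ⟨l, hl⟩ := exists_nat_eq_mul_of_dvd (by omega) hd (by omega)
    exact h ⟨l, -1, Or.inr rfl, by linear_combination hl⟩
  rw [sinGridSum_eq_cosGridSum_sub, cosGridSum_eq_zero hn hsub, cosGridSum_eq_zero hn hadd]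
  norm_num

lemma sum_xi2_mul_xi2 (n₁ n₂ m₁ m₂ j₁ j₂ : ℕ) :
    ∑ k₁ ∈ Finset.Icc 1 n₁, ∑ k₂ ∈ Finset.Icc 1 n₂,
        xi2 j₁ j₂ (gridPt n₁ k₁) (gridPt n₂ k₂) * xi2 m₁ m₂ (gridPt n₁ k₁) (gridPt n₂ k₂)
      = 4 / π ^ 2 * sinGridSum n₁ j₁ m₁ * sinGridSum n₂ j₂ m₂ := by
  rw [mul_assoc, sinGridSum, sinGridSum, Finset.sum_mul_sum, Finset.mul_sum]
  refine Finset.sum_congr rfl fun k₁ _ => ?_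
  rw [Finset.mul_sum]
  refine Finset.sum_congr rfl fun k₂ _ => ?_
  rw [xi2, xi2]
  ring

theorem stmt_5_general (n₁ n₂ m₁ m₂ j₁ j₂ : ℕ)
    (hm₁ : 1 ≤ m₁) (hm₁n : m₁ < n₁) (hm₂ : 1 ≤ m₂) (hm₂n : m₂ < n₂) :
    (∀ l₁ l₂ : ℕ, ∀ e₁ e₂ : ℤ,
      (e₁ = 1 ∨ e₁ = -1) → (e₂ = 1 ∨ e₂ = -1) →
      (j₁ : ℤ) = 2 * l₁ * n₁ + e₁ * m₁ → (j₂ : ℤ) = 2 * l₂ * n₂ + e₂ * m₂ →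
      ∑ k₁ ∈ Finset.Icc 1 n₁, ∑ k₂ ∈ Finset.Icc 1 n₂,
          xi2 j₁ j₂ (gridPt n₁ k₁) (gridPt n₂ k₂) *
            xi2 m₁ m₂ (gridPt n₁ k₁) (gridPt n₂ k₂)
        = (e₁ : ℝ) * (e₂ : ℝ) * (-1 : ℝ) ^ (l₁ + l₂) * n₁ * n₂ / π ^ 2) ∧
    ((¬ ∃ (l₁ l₂ : ℕ) (e₁ e₂ : ℤ), (e₁ = 1 ∨ e₁ = -1) ∧ (e₂ = 1 ∨ e₂ = -1) ∧
        (j₁ : ℤ) = 2 * l₁ * n₁ + e₁ * m₁ ∧ (j₂ : ℤ) = 2 * l₂ * n₂ + e₂ * m₂) →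
      ∑ k₁ ∈ Finset.Icc 1 n₁, ∑ k₂ ∈ Finset.Icc 1 n₂,
          xi2 j₁ j₂ (gridPt n₁ k₁) (gridPt n₂ k₂) *
            xi2 m₁ m₂ (gridPt n₁ k₁) (gridPt n₂ k₂)
        = 0) := by
  simp only [sum_xi2_mul_xi2]
  refine ⟨fun l₁ l₂ e₁ e₂ he₁ he₂ hj₁ hj₂ => ?_, fun h => ?_⟩
  · rw [sinGridSum_of_eq hm₁ hm₁n he₁ hj₁, sinGridSum_of_eq hm₂ hm₂n he₂ hj₂, pow_add]
    field_simp
    ring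
  · have hsplit : ¬ ((∃ (l : ℕ) (e : ℤ), (e = 1 ∨ e = -1) ∧ (j₁ : ℤ) = 2 * l * n₁ + e * m₁) ∧
        ∃ (l : ℕ) (e : ℤ), (e = 1 ∨ e = -1) ∧ (j₂ : ℤ) = 2 * l * n₂ + e * m₂) :=
      fun ⟨⟨l₁, e₁, he₁, hj₁⟩, l₂, e₂, he₂, hj₂⟩ => h ⟨l₁, l₂, e₁, e₂, he₁, he₂, hj₁, hj₂⟩
    rcases not_and_or.mp hsplit with h₁ | h₂
    · rw [sinGridSum_eq_zero hm₁n h₁]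
      ring
    · rw [sinGridSum_eq_zero hm₂n h₂]
      ring

theorem stmt_5 (n₁ n₂ m₁ m₂ j₁ j₂ : ℕ)
    (hn₁ : 1 ≤ n₁) (hn₂ : 1 ≤ n₂)
    (hm₁ : 1 ≤ m₁) (hm₁n : m₁ < n₁) (hm₂ : 1 ≤ m₂) (hm₂n : m₂ < n₂)
    (hj₁ : 1 ≤ j₁) (hj₂ : 1 ≤ j₂) :
    (∀ l₁ l₂ : ℕ, ∀ e₁ e₂ : ℤ,
      (e₁ = 1 ∨ e₁ = -1) → (e₂ = 1 ∨ e₂ = -1) →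
      (j₁ : ℤ) = 2 * l₁ * n₁ + e₁ * m₁ → (j₂ : ℤ) = 2 * l₂ * n₂ + e₂ * m₂ →
      ∑ k₁ ∈ Finset.Icc 1 n₁, ∑ k₂ ∈ Finset.Icc 1 n₂,
          xi2 j₁ j₂ (gridPt n₁ k₁) (gridPt n₂ k₂) *
            xi2 m₁ m₂ (gridPt n₁ k₁) (gridPt n₂ k₂)
        = (e₁ : ℝ) * (e₂ : ℝ) * (-1 : ℝ) ^ (l₁ + l₂) * n₁ * n₂ / π ^ 2) ∧
    ((¬ ∃ (l₁ l₂ : ℕ) (e₁ e₂ : ℤ), (e₁ = 1 ∨ e₁ = -1) ∧ (e₂ = 1 ∨ e₂ = -1) ∧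
        (j₁ : ℤ) = 2 * l₁ * n₁ + e₁ * m₁ ∧ (j₂ : ℤ) = 2 * l₂ * n₂ + e₂ * m₂) →
      ∑ k₁ ∈ Finset.Icc 1 n₁, ∑ k₂ ∈ Finset.Icc 1 n₂,
          xi2 j₁ j₂ (gridPt n₁ k₁) (gridPt n₂ k₂) *
            xi2 m₁ m₂ (gridPt n₁ k₁) (gridPt n₂ k₂)
        = 0) :=
  stmt_5_general n₁ n₂ m₁ m₂ j₁ j₂ hm₁ hm₁n hm₂ hm₂n
end

section
/- Let a = (a_{m₁,m₂})_{m₁,m₂ ≥ 1} be an absolutely summable family of reals and define φ(x₁,x₂) = ∑_{m₁,m₂ ≥ 1} a_{m₁,m₂} ξ_{m₁,m₂}(x₁,x₂). Then for all integers n₁, n₂ ≥ 1 and 1 ≤ j₁ < n₁, 1 ≤ j₂ < n₂: (π²/(n₁n₂)) ∑_{k₁=1}^{n₁} ∑_{k₂=1}^{n₂} φ(x_{k₁,k₂}) ξ_{j₁,j₂}(x_{k₁,k₂}) − a_{j₁,j₂} = ∑_{l₂=1}^{∞} (−1)^{l₂} (a_{j₁, 2l₂n₂+j₂} − a_{j₁,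 2l₂n₂−j₂}) + ∑_{l₁=1}^{∞} (−1)^{l₁} (a_{2l₁n₁+j₁, j₂} − a_{2l₁n₁−j₁, j₂}) + ∑_{l₁=1}^{∞} ∑_{l₂=1}^{∞} (−1)^{l₁+l₂} (a_{2l₁n₁+j₁, 2l₂n₂+j₂} − a_{2l₁n₁+j₁, 2l₂n₂−j₂} + a_{2l₁n₁−j₁, 2l₂n₂−j₂} − a_{2l₁n₁−j₁, 2l₂n₂+j₂}). -/
/-!
On the midpoint grid `x_k = (2k-1)π/(2n)` the sum `∑ₖ cos (c x_k)` telescopes to `0` unless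
`2n ∣ c`, in which case every term equals `(-1)^(c/2n)`. Writing `sin (m x) sin (j x)` as a
difference of cosines, `(2/n) ∑ₖ sin (m x_k) sin (j x_k)` is the aliasing coefficient
`aliasCoef n j m`, which is `±1` on the aliases `j`, `2ln ± j` of `j` and `0` elsewhere. Absolute
summability lets the grid sum pass under the series defining `φ`, so the left-hand side is
`∑ a_m aliasCoef(m₁) aliasCoef(m₂)`; summing along the aliases, first in `m₂` and then in `m₁`,
produces the three series.
-/

open Real

open Finset

noncomputable def aliasSign (n : ℕ) (c : ℤ) : ℝ :=
  if (2 * n : ℤ) ∣ c then (-1) ^ (c / (2 * n)) else 0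

noncomputable def aliasCoef (n j m : ℕ) : ℝ :=
  aliasSign n (m - j) - aliasSign n (m + j)

lemma abs_aliasSign_le (n : ℕ) (c : ℤ) : |aliasSign n c| ≤ 1 := by
  unfold aliasSign
  split_ifs
  · rw [abs_neg_one_zpow]
  · simp

lemma abs_aliasCoef_le (n j m : ℕ) : |aliasCoef n j m| ≤ 2 :=
  (abs_sub _ _).trans <| by linarith [abs_aliasSign_le n (m - j), abs_aliasSign_le n (m + j)]

lemma aliasSign_two_mul_mul {n : ℕ} (hn : n ≠ 0) (t : ℤ) : aliasSign n (2 * n * t) = (-1) ^ t := by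
  rw [aliasSign, if_pos (dvd_mul_right _ _), Int.mul_ediv_cancel_left _ (by omega)]

lemma aliasSign_add_two_mul {n : ℕ} (hn : n ≠ 0) (c : ℤ) :
    aliasSign n (c + 2 * n) = -aliasSign n c := by
  unfold aliasSign
  simp only [dvd_add_self_right]
  split_ifs
  · rw [Int.add_ediv_of_dvd_right (dvd_refl _), Int.ediv_self (by omega),
      zpow_add_one₀ (by norm_num)]
    ring
  · simp

lemma two_mul_sin_mul_sum_range_cos (θ : ℝ) (n : ℕ) :
    2 * sin θ * ∑ k ∈ range n, cos ((2 * k + 1) * θ) = sin (2 * n * θ) := by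
  induction n with
  | zero => simp
  | succ n ih =>
    rw [sum_range_succ, mul_add, ih, eq_comm, ← sub_eq_iff_eq_add', sin_sub_sin]
    push_cast
    ring_nf

lemma sum_Icc_one_eq_sum_range {M : Type*} [AddCommMonoid M] (f : ℕ → M) (n : ℕ) :
    ∑ k ∈ Icc 1 n, f k = ∑ k ∈ range n, f (k + 1) := by
  rw [range_eq_Ico, sum_Ico_add' f, zero_add, Ico_add_one_right_eq_Icc]

lemma sum_cos_mul_gridPt (n : ℕ) (c : ℤ) :
    ∑ k ∈ Icc 1 n, cos (c * gridPt n k) = n * aliasSign n c := by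
  obtain rfl | hn := eq_or_ne n 0
  · simp
  have hn' : (n : ℝ) ≠ 0 := Nat.cast_ne_zero.mpr hn
  by_cases hc : (2 * n : ℤ) ∣ c
  · obtain ⟨t, rfl⟩ := hc
    have hterm : ∀ k ∈ Icc 1 n, cos (((2 * n * t : ℤ) : ℝ) * gridPt n k) = (-1) ^ t := by
      intro k _
      have harg : ((2 * n * t : ℤ) : ℝ) * gridPt n k = t * π + ((t * (k - 1) : ℤ) : ℝ) * (2 * π) := by
        unfold gridPt
        push_cast
        field_simp
        ring
      rw [harg, cos_add_int_mul_two_pi, cos_int_mul_pi]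
    rw [sum_congr rfl hterm, sum_const, Nat.card_Icc, aliasSign_two_mul_mul hn, nsmul_eq_mul]
    simp
  · have hsin : sin (c * π / (2 * n)) ≠ 0 := by
      rw [Ne, sin_eq_zero_iff]
      rintro ⟨t, ht⟩
      have : (c : ℝ) = 2 * n * t := by
        field_simp at ht
        linarith
      exact hc ⟨t, by exact_mod_cast this⟩
    have hsum : ∑ k ∈ range n, cos ((2 * k + 1) * (c * π / (2 * n))) = 0 := by
      have h := two_mul_sin_mul_sum_range_cos (c * π / (2 * n)) n
      rw [show 2 * (n : ℝ) * (c * π / (2 * n)) = c * π by field_simp, sin_int_mul_pi] at h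
      simpa [hsin] using h
    rw [aliasSign, if_neg hc, mul_zero, sum_Icc_one_eq_sum_range, ← hsum]
    refine sum_congr rfl fun k _ => ?_
    congr 1
    unfold gridPt
    push_cast
    field_simp
    ring

lemma sum_sin_mul_sin_gridPt (n j m : ℕ) :
    ∑ k ∈ Icc 1 n, sin (m * gridPt n k) * sin (j * gridPt n k) = n / 2 * aliasCoef n j m := by
  have h : ∀ k ∈ Icc 1 n, sin (m * gridPt n k) * sin (j * gridPt n k)
      = (cos (((m - j : ℤ) : ℝ) * gridPt n k) - cos (((m + j : ℤ) : ℝ) * gridPt n k)) / 2 := by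
    intro k _
    rw [eq_div_iff two_ne_zero, mul_comm, ← mul_assoc, two_mul_sin_mul_sin]
    push_cast
    ring_nf
  rw [sum_congr rfl h, ← sum_div, sum_sub_distrib, sum_cos_mul_gridPt, sum_cos_mul_gridPt,
    aliasCoef]
  ring

lemma abs_xi2_le (j₁ j₂ : ℕ) (x₁ x₂ : ℝ) : |xi2 j₁ j₂ x₁ x₂| ≤ 2 / π := by
  rw [xi2, abs_mul, abs_mul, abs_of_pos (by positivity : (0 : ℝ) < 2 / π), mul_assoc]
  exact mul_le_of_le_one_right (by positivity)
    (mul_le_one₀ (abs_sin_le_one _) (abs_nonneg _) (abs_sin_le_one _))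

lemma sum_xi2_mul_xi2_gridPt {n₁ n₂ : ℕ} (hn₁ : n₁ ≠ 0) (hn₂ : n₂ ≠ 0) (m₁ m₂ j₁ j₂ : ℕ) :
    π ^ 2 / (n₁ * n₂) * ∑ k₁ ∈ Icc 1 n₁, ∑ k₂ ∈ Icc 1 n₂,
        xi2 m₁ m₂ (gridPt n₁ k₁) (gridPt n₂ k₂) * xi2 j₁ j₂ (gridPt n₁ k₁) (gridPt n₂ k₂)
      = aliasCoef n₁ j₁ m₁ * aliasCoef n₂ j₂ m₂ := by
  have hsplit : ∑ k₁ ∈ Icc 1 n₁, ∑ k₂ ∈ Icc 1 n₂,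
        xi2 m₁ m₂ (gridPt n₁ k₁) (gridPt n₂ k₂) * xi2 j₁ j₂ (gridPt n₁ k₁) (gridPt n₂ k₂)
      = (2 / π) ^ 2 * ((∑ k₁ ∈ Icc 1 n₁, sin (m₁ * gridPt n₁ k₁) * sin (j₁ * gridPt n₁ k₁))
          * ∑ k₂ ∈ Icc 1 n₂, sin (m₂ * gridPt n₂ k₂) * sin (j₂ * gridPt n₂ k₂)) := by
    simp_rw [sum_mul_sum, mul_sum, xi2]
    exact sum_congr rfl fun _ _ => sum_congr rfl fun _ _ => by ring
  have hn₁' : (n₁ : ℝ) ≠ 0 := Nat.cast_ne_zero.mpr hn₁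
  have hn₂' : (n₂ : ℝ) ≠ 0 := Nat.cast_ne_zero.mpr hn₂
  rw [hsplit, sum_sin_mul_sin_gridPt, sum_sin_mul_sin_gridPt]
  field_simp

lemma Summable.mul_of_abs_le {ι : Type*} {f c : ι → ℝ} (hf : Summable f) {C : ℝ}
    (hc : ∀ i, |c i| ≤ C) : Summable fun i => c i * f i :=
  (hf.abs.mul_left C).of_norm_bounded fun i => by
    rw [Real.norm_eq_abs, abs_mul]
    exact mul_le_mul_of_nonneg_right (hc i) (abs_nonneg _)

lemma Summable.neg_one_pow_mul {ι : Type*} {u : ι → ℝ} (hu : Summable u) (e : ι → ℕ) :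
    Summable fun i => (-1 : ℝ) ^ e i * u i :=
  hu.mul_of_abs_le fun i => (abs_neg_one_pow (e i)).le

lemma sum_gridPt_tsum_mul_xi2 {a : ℕ → ℕ → ℝ} (ha : Summable fun m : ℕ × ℕ => a m.1 m.2)
    (n₁ n₂ j₁ j₂ : ℕ) :
    ∑ k₁ ∈ Icc 1 n₁, ∑ k₂ ∈ Icc 1 n₂,
        (∑' m : ℕ × ℕ, a m.1 m.2 * xi2 m.1 m.2 (gridPt n₁ k₁) (gridPt n₂ k₂))
          * xi2 j₁ j₂ (gridPt n₁ k₁) (gridPt n₂ k₂)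
      = ∑' m : ℕ × ℕ, a m.1 m.2 * ∑ k₁ ∈ Icc 1 n₁, ∑ k₂ ∈ Icc 1 n₂,
          xi2 m.1 m.2 (gridPt n₁ k₁) (gridPt n₂ k₂) * xi2 j₁ j₂ (gridPt n₁ k₁) (gridPt n₂ k₂) := by
  have hterm (x₁ x₂ y : ℝ) : Summable fun m : ℕ × ℕ => a m.1 m.2 * xi2 m.1 m.2 x₁ x₂ * y :=
    ((ha.mul_of_abs_le fun m => abs_xi2_le m.1 m.2 x₁ x₂).mul_right y).congr fun m => by
      rw [mul_comm (xi2 _ _ _ _)]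
  simp_rw [← tsum_mul_right, mul_sum, ← mul_assoc]
  rw [Summable.tsum_finsetSum fun _ _ => summable_sum fun _ _ => hterm _ _ _]
  exact sum_congr rfl fun _ _ => (Summable.tsum_finsetSum fun _ _ => hterm _ _ _).symm

lemma injective_two_mul_mul_add {n : ℕ} (hn : n ≠ 0) (r : ℕ) :
    Function.Injective fun q : ℕ => 2 * n * q + r :=
  StrictMono.injective <| strictMono_nat_of_lt_succ fun q => by
    have : 2 * n * (q + 1) = 2 * n * q + 2 * n := by ring
    omega

lemma injective_alias_add {n : ℕ} (hn : n ≠ 0) (j : ℕ) :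
    Function.Injective fun l : ℕ => 2 * (l + 1) * n + j :=
  StrictMono.injective <| strictMono_nat_of_lt_succ fun l => by
    have : 2 * (l + 1 + 1) * n = 2 * (l + 1) * n + 2 * n := by ring
    omega

lemma injective_alias_sub {n j : ℕ} (hn : n ≠ 0) (hj : j ≤ 2 * n) :
    Function.Injective fun l : ℕ => 2 * (l + 1) * n - j :=
  StrictMono.injective <| strictMono_nat_of_lt_succ fun l => by
    have : 2 * (l + 1 + 1) * n = 2 * (l + 1) * n + 2 * n := by ring
    have : 2 * n ≤ 2 * (l + 1) * n := by nlinarith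
    omega

lemma Summable.alias_tail {n j : ℕ} (hn : n ≠ 0) (hj : j ≤ 2 * n) {f : ℕ → ℝ} (hf : Summable f) :
    Summable fun l : ℕ => (-1 : ℝ) ^ (l + 1) * (f (2 * (l + 1) * n + j) - f (2 * (l + 1) * n - j)) :=
  ((hf.comp_injective (injective_alias_add hn j)).sub
    (hf.comp_injective (injective_alias_sub hn hj))).neg_one_pow_mul _

lemma Summable.alias_tail_prod {n₁ n₂ j₁ j₂ : ℕ} (hn₁ : n₁ ≠ 0) (hj₁ : j₁ ≤ 2 * n₁)
    (hn₂ : n₂ ≠ 0) (hj₂ : j₂ ≤ 2 * n₂) {f : ℕ × ℕ → ℝ} (hf : Summable f) :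
    Summable fun l : ℕ × ℕ => (-1 : ℝ) ^ ((l.1 + 1) + (l.2 + 1)) *
      (f (2 * (l.1 + 1) * n₁ + j₁, 2 * (l.2 + 1) * n₂ + j₂)
        - f (2 * (l.1 + 1) * n₁ + j₁, 2 * (l.2 + 1) * n₂ - j₂)
        + f (2 * (l.1 + 1) * n₁ - j₁, 2 * (l.2 + 1) * n₂ - j₂)
        - f (2 * (l.1 + 1) * n₁ - j₁, 2 * (l.2 + 1) * n₂ + j₂)) := by
  have hP₁ := injective_alias_add hn₁ j₁
  have hM₁ := injective_alias_sub hn₁ hj₁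
  have hP₂ := injective_alias_add hn₂ j₂
  have hM₂ := injective_alias_sub hn₂ hj₂
  exact ((((hf.comp_injective (hP₁.prodMap hP₂)).sub (hf.comp_injective (hP₁.prodMap hM₂))).add
    (hf.comp_injective (hM₁.prodMap hM₂))).sub
      (hf.comp_injective (hM₁.prodMap hP₂))).neg_one_pow_mul _

lemma tsum_aliasSign_sub_mul {n r : ℕ} (hr : r < 2 * n) (f : ℕ → ℝ) :
    ∑' m : ℕ, aliasSign n (m - r) * f m = ∑' q : ℕ, (-1) ^ q * f (2 * n * q + r) := by
  have hn : n ≠ 0 := by omega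
  rw [← (injective_two_mul_mul_add hn r).tsum_eq]
  · refine tsum_congr fun q => ?_
    push_cast
    rw [add_sub_cancel_right, aliasSign_two_mul_mul hn, zpow_natCast]
  · intro m hm
    have hdvd : (2 * n : ℤ) ∣ m - r := by
      by_contra h
      exact hm (by simp [aliasSign, h])
    obtain ⟨t, ht⟩ := hdvd
    have ht0 : 0 ≤ t := by nlinarith
    lift t to ℕ using ht0
    refine ⟨t, ?_⟩
    have : ((2 * n * t + r : ℕ) : ℤ) = m := by push_cast; linarith
    exact_mod_cast this

lemma tsum_aliasCoef_mul {n j : ℕ} (hj : 0 < j) (hjn : j < 2 * n) {f : ℕ → ℝ} (hf : Summable f) :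
    ∑' m, aliasCoef n j m * f m
      = f j + ∑' l : ℕ, (-1) ^ (l + 1) * (f (2 * (l + 1) * n + j) - f (2 * (l + 1) * n - j)) := by
  have hn : n ≠ 0 := by omega
  -- `2n ∣ m + j` exactly when `m` is an alias of the residue `2n - j`, with the opposite sign
  have hadd (m : ℕ) : aliasSign n (m + j) = -aliasSign n (m - (2 * n - j : ℕ)) := by
    rw [← aliasSign_add_two_mul hn]
    push_cast [Nat.cast_sub hjn.le]
    ring_nf
  have hsub (l : ℕ) : 2 * n * l + (2 * n - j) = 2 * (l + 1) * n - j := by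
    have : 2 * (l + 1) * n = 2 * n * l + 2 * n := by ring
    omega
  have hP : Summable fun q : ℕ => (-1 : ℝ) ^ q * f (2 * n * q + j) :=
    (hf.comp_injective (injective_two_mul_mul_add hn j)).neg_one_pow_mul id
  have hP' : Summable fun l : ℕ => (-1 : ℝ) ^ (l + 1) * f (2 * (l + 1) * n + j) :=
    (hf.comp_injective (injective_alias_add hn j)).neg_one_pow_mul _
  have hM' : Summable fun l : ℕ => (-1 : ℝ) ^ (l + 1) * f (2 * (l + 1) * n - j) :=
    (hf.comp_injective (injective_alias_sub hn hjn.le)).neg_one_pow_mul _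
  have hP_shift : ∑' q : ℕ, (-1 : ℝ) ^ (q + 1) * f (2 * n * (q + 1) + j)
      = ∑' l : ℕ, (-1) ^ (l + 1) * f (2 * (l + 1) * n + j) := by
    simp_rw [mul_right_comm 2 n]
  have hM_shift : ∑' q : ℕ, (-1 : ℝ) ^ q * f (2 * n * q + (2 * n - j))
      = -∑' l : ℕ, (-1) ^ (l + 1) * f (2 * (l + 1) * n - j) := by
    rw [← tsum_neg]
    exact tsum_congr fun l => by rw [hsub, pow_succ]; ring
  simp_rw [aliasCoef, sub_mul]
  rw [(hf.mul_of_abs_le fun m => abs_aliasSign_le n _).tsum_sub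
    (hf.mul_of_abs_le fun m => abs_aliasSign_le n _)]
  simp_rw [hadd, neg_mul, tsum_neg, sub_neg_eq_add, mul_sub]
  rw [tsum_aliasSign_sub_mul hjn, tsum_aliasSign_sub_mul (by omega), hP.tsum_eq_zero_add,
    hP_shift, hM_shift, hP'.tsum_sub hM', pow_zero, one_mul, mul_zero, zero_add]
  ring

lemma tsum_aliasCoef_mul_aliasCoef_mul {n₁ n₂ j₁ j₂ : ℕ} (hj₁ : 0 < j₁) (hj₁n : j₁ < 2 * n₁)
    (hj₂ : 0 < j₂) (hj₂n : j₂ < 2 * n₂) {f : ℕ × ℕ → ℝ} (hf : Summable f) :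
    ∑' m : ℕ × ℕ, aliasCoef n₁ j₁ m.1 * (aliasCoef n₂ j₂ m.2 * f m)
      = f (j₁, j₂)
        + (∑' l₂ : ℕ, (-1 : ℝ) ^ (l₂ + 1) *
            (f (j₁, 2 * (l₂ + 1) * n₂ + j₂) - f (j₁, 2 * (l₂ + 1) * n₂ - j₂)))
        + (∑' l₁ : ℕ, (-1 : ℝ) ^ (l₁ + 1) *
            (f (2 * (l₁ + 1) * n₁ + j₁, j₂) - f (2 * (l₁ + 1) * n₁ - j₁, j₂)))
        + ∑' l : ℕ × ℕ, (-1 : ℝ) ^ ((l.1 + 1) + (l.2 + 1)) *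
            (f (2 * (l.1 + 1) * n₁ + j₁, 2 * (l.2 + 1) * n₂ + j₂)
              - f (2 * (l.1 + 1) * n₁ + j₁, 2 * (l.2 + 1) * n₂ - j₂)
              + f (2 * (l.1 + 1) * n₁ - j₁, 2 * (l.2 + 1) * n₂ - j₂)
              - f (2 * (l.1 + 1) * n₁ - j₁, 2 * (l.2 + 1) * n₂ + j₂)) := by
  have hn₁ : n₁ ≠ 0 := by omega
  have hn₂ : n₂ ≠ 0 := by omega
  have hrow (x : ℕ) : Summable fun y => f (x, y) := hf.prod_factor x
  have hcol : Summable fun x => f (x, j₂) := hf.comp_injective (Prod.mk_left_injective j₂)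
  have hG : Summable fun m : ℕ × ℕ => aliasCoef n₂ j₂ m.2 * f m :=
    hf.mul_of_abs_le fun m => abs_aliasCoef_le _ _ _
  have hF : Summable fun m : ℕ × ℕ => aliasCoef n₁ j₁ m.1 * (aliasCoef n₂ j₂ m.2 * f m) :=
    hG.mul_of_abs_le fun m => abs_aliasCoef_le _ _ _
  have hD := hf.alias_tail_prod hn₁ hj₁n.le hn₂ hj₂n.le
  set g : ℕ → ℝ := fun x => ∑' y, aliasCoef n₂ j₂ y * f (x, y)
  have hg (x : ℕ) : g x = f (x, j₂)
      + ∑' l₂ : ℕ, (-1) ^ (l₂ + 1) * (f (x, 2 * (l₂ + 1) * n₂ + j₂) - f (x, 2 * (l₂ + 1) * n₂ - j₂)) :=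
    tsum_aliasCoef_mul hj₂ hj₂n (hrow x)
  have hrow_diff (l₁ : ℕ) : (-1) ^ (l₁ + 1) * (g (2 * (l₁ + 1) * n₁ + j₁) - g (2 * (l₁ + 1) * n₁ - j₁))
      = (-1) ^ (l₁ + 1) * (f (2 * (l₁ + 1) * n₁ + j₁, j₂) - f (2 * (l₁ + 1) * n₁ - j₁, j₂))
        + ∑' l₂ : ℕ, (-1 : ℝ) ^ ((l₁ + 1) + (l₂ + 1)) *
            (f (2 * (l₁ + 1) * n₁ + j₁, 2 * (l₂ + 1) * n₂ + j₂)
              - f (2 * (l₁ + 1) * n₁ + j₁, 2 * (l₂ + 1) * n₂ - j₂)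
              + f (2 * (l₁ + 1) * n₁ - j₁, 2 * (l₂ + 1) * n₂ - j₂)
              - f (2 * (l₁ + 1) * n₁ - j₁, 2 * (l₂ + 1) * n₂ + j₂)) := by
    rw [hg, hg, add_sub_add_comm, mul_add, ← Summable.tsum_sub ((hrow _).alias_tail hn₂ hj₂n.le)
      ((hrow _).alias_tail hn₂ hj₂n.le), ← tsum_mul_left]
    congr 1
    exact tsum_congr fun l₂ => by rw [pow_add]; ring
  calc ∑' m : ℕ × ℕ, aliasCoef n₁ j₁ m.1 * (aliasCoef n₂ j₂ m.2 * f m)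
      = ∑' x, aliasCoef n₁ j₁ x * g x := by
        rw [hF.tsum_prod' hF.prod_factor]
        simp_rw [tsum_mul_left]
        rfl
    _ = g j₁ + ∑' l₁ : ℕ, (-1) ^ (l₁ + 1) *
          (g (2 * (l₁ + 1) * n₁ + j₁) - g (2 * (l₁ + 1) * n₁ - j₁)) :=
        tsum_aliasCoef_mul hj₁ hj₁n hG.prod
    _ = _ := by
        rw [tsum_congr hrow_diff, (hcol.alias_tail hn₁ hj₁n.le).tsum_add hD.prod,
          hD.tsum_prod' hD.prod_factor, hg]
        ring

theorem stmt_6_general (a : ℕ → ℕ → ℝ)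
    (hsum : Summable fun m : ℕ × ℕ => |a m.1 m.2|)
    (φ : ℝ → ℝ → ℝ)
    (hφ : ∀ x₁ x₂ : ℝ, φ x₁ x₂ = ∑' m : ℕ × ℕ, a m.1 m.2 * xi2 m.1 m.2 x₁ x₂)
    (n₁ n₂ j₁ j₂ : ℕ)
    (hj₁ : 1 ≤ j₁) (hj₁n : j₁ < n₁) (hj₂ : 1 ≤ j₂) (hj₂n : j₂ < n₂) :
    (π ^ 2 / (n₁ * n₂)) *
      ∑ k₁ ∈ Finset.Icc 1 n₁, ∑ k₂ ∈ Finset.Icc 1 n₂,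
        φ (gridPt n₁ k₁) (gridPt n₂ k₂) * xi2 j₁ j₂ (gridPt n₁ k₁) (gridPt n₂ k₂)
      - a j₁ j₂
    = (∑' l₂ : ℕ, (-1 : ℝ) ^ (l₂ + 1) *
          (a j₁ (2 * (l₂ + 1) * n₂ + j₂) - a j₁ (2 * (l₂ + 1) * n₂ - j₂)))
      + (∑' l₁ : ℕ, (-1 : ℝ) ^ (l₁ + 1) *
          (a (2 * (l₁ + 1) * n₁ + j₁) j₂ - a (2 * (l₁ + 1) * n₁ - j₁) j₂))
      + ∑' l : ℕ × ℕ, (-1 : ℝ) ^ ((l.1 + 1) + (l.2 + 1)) *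
          (a (2 * (l.1 + 1) * n₁ + j₁) (2 * (l.2 + 1) * n₂ + j₂)
            - a (2 * (l.1 + 1) * n₁ + j₁) (2 * (l.2 + 1) * n₂ - j₂)
            + a (2 * (l.1 + 1) * n₁ - j₁) (2 * (l.2 + 1) * n₂ - j₂)
            - a (2 * (l.1 + 1) * n₁ - j₁) (2 * (l.2 + 1) * n₂ + j₂)) := by
  have ha : Summable fun m : ℕ × ℕ => a m.1 m.2 := summable_abs_iff.mp hsum
  have hgrid : π ^ 2 / (n₁ * n₂) * ∑ k₁ ∈ Icc 1 n₁, ∑ k₂ ∈ Icc 1 n₂,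
        φ (gridPt n₁ k₁) (gridPt n₂ k₂) * xi2 j₁ j₂ (gridPt n₁ k₁) (gridPt n₂ k₂)
      = ∑' m : ℕ × ℕ, aliasCoef n₁ j₁ m.1 * (aliasCoef n₂ j₂ m.2 * a m.1 m.2) := by
    simp_rw [hφ]
    rw [sum_gridPt_tsum_mul_xi2 ha, ← tsum_mul_left]
    refine tsum_congr fun m => ?_
    rw [mul_left_comm, sum_xi2_mul_xi2_gridPt (by omega) (by omega)]
    ring
  rw [hgrid, tsum_aliasCoef_mul_aliasCoef_mul hj₁ (by omega) hj₂ (by omega) ha]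
  ring

theorem stmt_6 (a : ℕ → ℕ → ℝ)
    (ha0 : ∀ m₁ m₂ : ℕ, m₁ = 0 ∨ m₂ = 0 → a m₁ m₂ = 0)
    (hsum : Summable fun m : ℕ × ℕ => |a m.1 m.2|)
    (φ : ℝ → ℝ → ℝ)
    (hφ : ∀ x₁ x₂ : ℝ, φ x₁ x₂ = ∑' m : ℕ × ℕ, a m.1 m.2 * xi2 m.1 m.2 x₁ x₂)
    (n₁ n₂ j₁ j₂ : ℕ) (hn₁ : 1 ≤ n₁) (hn₂ : 1 ≤ n₂)
    (hj₁ : 1 ≤ j₁) (hj₁n : j₁ < n₁) (hj₂ : 1 ≤ j₂) (hj₂n : j₂ < n₂) :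
    (π ^ 2 / (n₁ * n₂)) *
      ∑ k₁ ∈ Finset.Icc 1 n₁, ∑ k₂ ∈ Finset.Icc 1 n₂,
        φ (gridPt n₁ k₁) (gridPt n₂ k₂) * xi2 j₁ j₂ (gridPt n₁ k₁) (gridPt n₂ k₂)
      - a j₁ j₂
    = (∑' l₂ : ℕ, (-1 : ℝ) ^ (l₂ + 1) *
          (a j₁ (2 * (l₂ + 1) * n₂ + j₂) - a j₁ (2 * (l₂ + 1) * n₂ - j₂)))
      + (∑' l₁ : ℕ, (-1 : ℝ) ^ (l₁ + 1) *
          (a (2 * (l₁ + 1) * n₁ + j₁) j₂ - a (2 * (l₁ + 1) * n₁ - j₁) j₂))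
      + ∑' l : ℕ × ℕ, (-1 : ℝ) ^ ((l.1 + 1) + (l.2 + 1)) *
          (a (2 * (l.1 + 1) * n₁ + j₁) (2 * (l.2 + 1) * n₂ + j₂)
            - a (2 * (l.1 + 1) * n₁ + j₁) (2 * (l.2 + 1) * n₂ - j₂)
            + a (2 * (l.1 + 1) * n₁ - j₁) (2 * (l.2 + 1) * n₂ - j₂)
            - a (2 * (l.1 + 1) * n₁ - j₁) (2 * (l.2 + 1) * n₂ + j₂)) :=
  stmt_6_general a hsum φ hφ n₁ n₂ j₁ j₂ hj₁ hj₁n hj₂ hj₂n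
end

section
/- Let θ > 2 and let a = (a_{m₁,m₂})_{m₁,m₂ ≥ 1} be a family of reals with A² := ∑_{m₁,m₂ ≥ 1} (m₁²+m₂²)^θ a_{m₁,m₂}² < ∞. Set C₀ = 2∑_{l=1}^{∞} l^{−θ} + 4(∑_{l=1}^{∞} l^{−θ/2})². Then for all integers n₁, n₂ ≥ 1 and 1 ≤ j₁ < n₁, 1 ≤ j₂ < n₂, the aliasing sum Υ_{j₁,j₂} := ∑_{l₂=1}^{∞} (−1)^{l₂}(a_{j₁,2l₂n₂+j₂} − a_{j₁,2l₂n₂−j₂}) + ∑_{l₁=1}^{∞} (−1)^{l₁}(a_{2l₁n₁+j₁,j₂} − a_{2l₁n₁−j₁,j₂}) + ∑_{l₁=1}^{∞}∑_{l₂=1}^{∞} (−1)^{l₁+l₂}(a_{2l₁n₁+j₁,2l₂n₂+j₂} − a_{2l₁n₁+j₁,2l₂n₂−j₂} + a_{2l₁n₁−j₁,2l₂n₂−j₂} − a_{2l₁n₁−j₁,2l₂n₂+j₂}) converges absolutely and satisfies |Υ_{j₁,j₂}| ≤ C₀ (n₁^{−θ} + n₂^{−θ}) A. -/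
/-!
The H^θ-norm controls every coefficient: `(m₁² + m₂²)^θ a_{m₁,m₂}² ≤ A²`. An aliased index
`2ln ± j` with `j < n` is at least `ln`, so the edge terms are `O(A (ln)^{-θ})` and, since
`m₁² + m₂² ≥ 2m₁m₂`, the corner terms are `O(A (l₁n₁ l₂n₂)^{-θ/2})`. For `θ > 2` both majorants
are summable in `l`, and `n₁^{-θ/2} n₂^{-θ/2} ≤ n₁^{-θ} + n₂^{-θ}` merges the two bounds.
-/

open Real

lemma sq_rpow_neg_half {x : ℝ} (hx : 0 ≤ x) (θ : ℝ) : (x ^ 2) ^ (-(θ / 2)) = x ^ (-θ) := by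
  rw [← rpow_natCast_mul hx]
  congr 1
  push_cast
  ring

lemma rpow_neg_half_sq {x : ℝ} (hx : 0 ≤ x) (θ : ℝ) : (x ^ (-(θ / 2))) ^ 2 = x ^ (-θ) := by
  rw [← rpow_mul_natCast hx]
  norm_num

lemma rpow_neg_half_mul_rpow_neg_half_le {x y : ℝ} (hx : 0 ≤ x) (hy : 0 ≤ y) (θ : ℝ) :
    x ^ (-(θ / 2)) * y ^ (-(θ / 2)) ≤ x ^ (-θ) + y ^ (-θ) := by
  nlinarith [rpow_neg_half_sq hx θ, rpow_neg_half_sq hy θ,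
    sq_nonneg (x ^ (-(θ / 2)) - y ^ (-(θ / 2))), rpow_nonneg hx (-(θ / 2)),
    rpow_nonneg hy (-(θ / 2))]

lemma summable_nat_add_one_rpow {p : ℝ} (hp : p < -1) :
    Summable fun l : ℕ => ((l : ℝ) + 1) ^ p := by
  simpa using (summable_nat_add_iff 1).2 (summable_nat_rpow.2 hp)

lemma summable_abs_and_abs_tsum_le_of_abs_le {ι : Type*} {g u : ι → ℝ} {c U : ℝ}
    (hu : HasSum u U) (hg : ∀ i, |g i| ≤ c * u i) :
    Summable (fun i => |g i|) ∧ |∑' i, g i| ≤ c * U :=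
  ⟨(hu.summable.mul_left c).of_nonneg_of_le (fun _ => abs_nonneg _) hg,
    tsum_of_norm_bounded (f := g) (hu.mul_left c) hg⟩

lemma abs_le_of_rpow_mul_sq_le {b x A θ : ℝ} (hb : 0 < b) (hA : 0 ≤ A)
    (h : b ^ θ * x ^ 2 ≤ A ^ 2) : |x| ≤ A * b ^ (-(θ / 2)) := by
  refine abs_le_of_sq_le_sq ?_ (by positivity)
  rw [mul_pow, rpow_neg_half_sq hb.le, rpow_neg hb.le, ← div_eq_mul_inv,
    le_div_iff₀ (rpow_pos_of_pos hb θ)]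
  linarith

section CoefficientDecay

variable {θ A : ℝ} {a : ℕ → ℕ → ℝ}

lemma abs_le_of_le_sq_add_sq (hA : 0 ≤ A) (hθ : 0 ≤ θ)
    (ha : ∀ m₁ m₂ : ℕ, ((m₁ : ℝ) ^ 2 + (m₂ : ℝ) ^ 2) ^ θ * a m₁ m₂ ^ 2 ≤ A ^ 2)
    {m₁ m₂ : ℕ} {b : ℝ} (hb : 0 < b) (hbm : b ≤ (m₁ : ℝ) ^ 2 + (m₂ : ℝ) ^ 2) :
    |a m₁ m₂| ≤ A * b ^ (-(θ / 2)) :=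
  abs_le_of_rpow_mul_sq_le hb hA <| (mul_le_mul_of_nonneg_right
    (rpow_le_rpow hb.le hbm hθ) (sq_nonneg _)).trans (ha m₁ m₂)

lemma abs_le_rpow_of_le_fst (hA : 0 ≤ A) (hθ : 0 ≤ θ)
    (ha : ∀ m₁ m₂ : ℕ, ((m₁ : ℝ) ^ 2 + (m₂ : ℝ) ^ 2) ^ θ * a m₁ m₂ ^ 2 ≤ A ^ 2)
    {k : ℝ} {m₁ : ℕ} (m₂ : ℕ) (hk : 0 < k) (hkm : k ≤ m₁) :
    |a m₁ m₂| ≤ A * k ^ (-θ) := by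
  rw [← sq_rpow_neg_half hk.le]
  exact abs_le_of_le_sq_add_sq hA hθ ha (by positivity) (by nlinarith)

lemma abs_le_rpow_of_le_snd (hA : 0 ≤ A) (hθ : 0 ≤ θ)
    (ha : ∀ m₁ m₂ : ℕ, ((m₁ : ℝ) ^ 2 + (m₂ : ℝ) ^ 2) ^ θ * a m₁ m₂ ^ 2 ≤ A ^ 2)
    {k : ℝ} (m₁ : ℕ) {m₂ : ℕ} (hk : 0 < k) (hkm : k ≤ m₂) :
    |a m₁ m₂| ≤ A * k ^ (-θ) :=
  abs_le_rpow_of_le_fst (a := fun m₁ m₂ => a m₂ m₁) hA hθ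
    (fun m₁ m₂ => by simpa only [add_comm] using ha m₂ m₁) m₁ hk hkm

lemma abs_le_rpow_mul_rpow_of_le_of_le (hA : 0 ≤ A) (hθ : 0 ≤ θ)
    (ha : ∀ m₁ m₂ : ℕ, ((m₁ : ℝ) ^ 2 + (m₂ : ℝ) ^ 2) ^ θ * a m₁ m₂ ^ 2 ≤ A ^ 2)
    {k₁ k₂ : ℝ} {m₁ m₂ : ℕ} (hk₁ : 0 < k₁) (hkm₁ : k₁ ≤ m₁) (hk₂ : 0 < k₂) (hkm₂ : k₂ ≤ m₂) :
    |a m₁ m₂| ≤ A * (k₁ ^ (-(θ / 2)) * k₂ ^ (-(θ / 2))) := by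
  rw [← mul_rpow hk₁.le hk₂.le]
  exact abs_le_of_le_sq_add_sq hA hθ ha (by positivity)
    (by nlinarith [sq_nonneg ((m₁ : ℝ) - m₂), mul_le_mul hkm₁ hkm₂ hk₂.le (hk₁.le.trans hkm₁)])

end CoefficientDecay

-- The summation index `l` stands for the paper's `l - 1`.
def edgeAliasTerm (f : ℕ → ℝ) (n j l : ℕ) : ℝ :=
  (-1) ^ (l + 1) * (f (2 * (l + 1) * n + j) - f (2 * (l + 1) * n - j))

def cornerAliasTerm (F : ℕ → ℕ → ℝ) (n₁ n₂ j₁ j₂ : ℕ) (l : ℕ × ℕ) : ℝ :=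
  (-1) ^ ((l.1 + 1) + (l.2 + 1)) *
    (F (2 * (l.1 + 1) * n₁ + j₁) (2 * (l.2 + 1) * n₂ + j₂)
      - F (2 * (l.1 + 1) * n₁ + j₁) (2 * (l.2 + 1) * n₂ - j₂)
      + F (2 * (l.1 + 1) * n₁ - j₁) (2 * (l.2 + 1) * n₂ - j₂)
      - F (2 * (l.1 + 1) * n₁ - j₁) (2 * (l.2 + 1) * n₂ + j₂))

lemma succ_mul_pos_of_lt {n j : ℕ} (hj : j < n) (l : ℕ) : (0 : ℝ) < ((l : ℝ) + 1) * n := by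
  have : (0 : ℝ) < n := by exact_mod_cast Nat.zero_lt_of_lt hj
  positivity

lemma succ_mul_le_two_succ_mul_sub_and_add {n j : ℕ} (hj : j < n) (l : ℕ) :
    ((l : ℝ) + 1) * n ≤ ((2 * (l + 1) * n - j : ℕ) : ℝ) ∧
      ((l : ℝ) + 1) * n ≤ ((2 * (l + 1) * n + j : ℕ) : ℝ) := by
  have hjn : j ≤ (l + 1) * n := hj.le.trans (Nat.le_mul_of_pos_left n l.succ_pos)
  have hsub : (l + 1) * n ≤ 2 * (l + 1) * n - j := by rw [mul_assoc]; omega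
  have hadd : (l + 1) * n ≤ 2 * (l + 1) * n + j := by rw [mul_assoc]; omega
  constructor <;> exact_mod_cast ‹_›

lemma abs_edgeAliasTerm_le {f : ℕ → ℝ} {C θ : ℝ} {n j : ℕ} (hj : j < n)
    (hf : ∀ (k : ℝ) (m : ℕ), 0 < k → k ≤ m → |f m| ≤ C * k ^ (-θ)) (l : ℕ) :
    |edgeAliasTerm f n j l| ≤ 2 * C * (n : ℝ) ^ (-θ) * ((l : ℝ) + 1) ^ (-θ) := by
  have hk := succ_mul_pos_of_lt hj l
  obtain ⟨hsub, hadd⟩ := succ_mul_le_two_succ_mul_sub_and_add hj l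
  have hp := abs_le.1 (hf _ _ hk hadd)
  have hm := abs_le.1 (hf _ _ hk hsub)
  rw [mul_rpow (by positivity) (by positivity)] at hp hm
  rw [edgeAliasTerm, abs_mul, abs_pow, abs_neg, abs_one, one_pow, one_mul]
  exact abs_le.2 ⟨by linarith, by linarith⟩

lemma abs_cornerAliasTerm_le {F : ℕ → ℕ → ℝ} {C s : ℝ} {n₁ n₂ j₁ j₂ : ℕ}
    (hj₁ : j₁ < n₁) (hj₂ : j₂ < n₂)
    (hF : ∀ (k₁ k₂ : ℝ) (m₁ m₂ : ℕ), 0 < k₁ → k₁ ≤ m₁ → 0 < k₂ → k₂ ≤ m₂ →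
      |F m₁ m₂| ≤ C * (k₁ ^ (-s) * k₂ ^ (-s)))
    (l : ℕ × ℕ) :
    |cornerAliasTerm F n₁ n₂ j₁ j₂ l| ≤
      4 * C * ((n₁ : ℝ) ^ (-s) * (n₂ : ℝ) ^ (-s)) *
        (((l.1 : ℝ) + 1) ^ (-s) * ((l.2 : ℝ) + 1) ^ (-s)) := by
  have hk₁ := succ_mul_pos_of_lt hj₁ l.1
  have hk₂ := succ_mul_pos_of_lt hj₂ l.2
  obtain ⟨hsub₁, hadd₁⟩ := succ_mul_le_two_succ_mul_sub_and_add hj₁ l.1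
  obtain ⟨hsub₂, hadd₂⟩ := succ_mul_le_two_succ_mul_sub_and_add hj₂ l.2
  have hpp := abs_le.1 (hF _ _ _ _ hk₁ hadd₁ hk₂ hadd₂)
  have hpm := abs_le.1 (hF _ _ _ _ hk₁ hadd₁ hk₂ hsub₂)
  have hmm := abs_le.1 (hF _ _ _ _ hk₁ hsub₁ hk₂ hsub₂)
  have hmp := abs_le.1 (hF _ _ _ _ hk₁ hsub₁ hk₂ hadd₂)
  rw [mul_rpow (by positivity) (by positivity), mul_rpow (by positivity) (by positivity)]
    at hpp hpm hmm hmp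
  rw [cornerAliasTerm, abs_mul, abs_pow, abs_neg, abs_one, one_pow, one_mul]
  exact abs_le.2 ⟨by linarith, by linarith⟩

theorem stmt_7_general (θ : ℝ) (hθ : 2 < θ) (a : ℕ → ℕ → ℝ) (A : ℝ) (hA : 0 ≤ A)
    (hsum : Summable fun m : ℕ × ℕ =>
      (((m.1 : ℝ) ^ 2 + (m.2 : ℝ) ^ 2) ^ θ) * (a m.1 m.2) ^ 2)
    (hA2 : (∑' m : ℕ × ℕ, (((m.1 : ℝ) ^ 2 + (m.2 : ℝ) ^ 2) ^ θ) * (a m.1 m.2) ^ 2) = A ^ 2)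
    (n₁ n₂ j₁ j₂ : ℕ)
    (hj₁n : j₁ < n₁) (hj₂n : j₂ < n₂) :
    (Summable fun l₂ : ℕ =>
        |(-1 : ℝ) ^ (l₂ + 1) *
          (a j₁ (2 * (l₂ + 1) * n₂ + j₂) - a j₁ (2 * (l₂ + 1) * n₂ - j₂))|) ∧
    (Summable fun l₁ : ℕ =>
        |(-1 : ℝ) ^ (l₁ + 1) *
          (a (2 * (l₁ + 1) * n₁ + j₁) j₂ - a (2 * (l₁ + 1) * n₁ - j₁) j₂)|) ∧
    (Summable fun l : ℕ × ℕ =>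
        |(-1 : ℝ) ^ ((l.1 + 1) + (l.2 + 1)) *
          (a (2 * (l.1 + 1) * n₁ + j₁) (2 * (l.2 + 1) * n₂ + j₂)
            - a (2 * (l.1 + 1) * n₁ + j₁) (2 * (l.2 + 1) * n₂ - j₂)
            + a (2 * (l.1 + 1) * n₁ - j₁) (2 * (l.2 + 1) * n₂ - j₂)
            - a (2 * (l.1 + 1) * n₁ - j₁) (2 * (l.2 + 1) * n₂ + j₂))|) ∧
    |(∑' l₂ : ℕ, (-1 : ℝ) ^ (l₂ + 1) *
          (a j₁ (2 * (l₂ + 1) * n₂ + j₂) - a j₁ (2 * (l₂ + 1) * n₂ - j₂)))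
      + (∑' l₁ : ℕ, (-1 : ℝ) ^ (l₁ + 1) *
          (a (2 * (l₁ + 1) * n₁ + j₁) j₂ - a (2 * (l₁ + 1) * n₁ - j₁) j₂))
      + ∑' l : ℕ × ℕ, (-1 : ℝ) ^ ((l.1 + 1) + (l.2 + 1)) *
          (a (2 * (l.1 + 1) * n₁ + j₁) (2 * (l.2 + 1) * n₂ + j₂)
            - a (2 * (l.1 + 1) * n₁ + j₁) (2 * (l.2 + 1) * n₂ - j₂)
            + a (2 * (l.1 + 1) * n₁ - j₁) (2 * (l.2 + 1) * n₂ - j₂)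
            - a (2 * (l.1 + 1) * n₁ - j₁) (2 * (l.2 + 1) * n₂ + j₂))|
      ≤ (2 * (∑' l : ℕ, ((l : ℝ) + 1) ^ (-θ))
          + 4 * (∑' l : ℕ, ((l : ℝ) + 1) ^ (-(θ / 2))) ^ 2) *
        ((n₁ : ℝ) ^ (-θ) + (n₂ : ℝ) ^ (-θ)) * A := by
  have hθ₀ : 0 ≤ θ := by linarith
  have hcoeff : ∀ m₁ m₂ : ℕ, ((m₁ : ℝ) ^ 2 + (m₂ : ℝ) ^ 2) ^ θ * a m₁ m₂ ^ 2 ≤ A ^ 2 :=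
    fun m₁ m₂ => hA2 ▸ hsum.le_tsum (m₁, m₂) fun _ _ => by positivity
  set T := ∑' l : ℕ, ((l : ℝ) + 1) ^ (-θ)
  set S := ∑' l : ℕ, ((l : ℝ) + 1) ^ (-(θ / 2))
  have hT : HasSum _ T := (summable_nat_add_one_rpow (p := -θ) (by linarith)).hasSum
  have hS : HasSum _ S := (summable_nat_add_one_rpow (p := -(θ / 2)) (by linarith)).hasSum
  have hSS := hS.mul hS <| hS.summable.mul_of_nonneg hS.summable
    (fun _ => by positivity) (fun _ => by positivity)
  obtain ⟨hX, hXle⟩ := summable_abs_and_abs_tsum_le_of_abs_le hT <|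
    abs_edgeAliasTerm_le (f := a j₁) hj₂n fun _ _ hk hkm =>
      abs_le_rpow_of_le_snd hA hθ₀ hcoeff j₁ hk hkm
  obtain ⟨hY, hYle⟩ := summable_abs_and_abs_tsum_le_of_abs_le hT <|
    abs_edgeAliasTerm_le (f := fun m => a m j₂) hj₁n fun _ _ hk hkm =>
      abs_le_rpow_of_le_fst hA hθ₀ hcoeff j₂ hk hkm
  obtain ⟨hZ, hZle⟩ := summable_abs_and_abs_tsum_le_of_abs_le hSS <|
    abs_cornerAliasTerm_le hj₁n hj₂n fun _ _ _ _ hk₁ hkm₁ hk₂ hkm₂ =>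
      abs_le_rpow_mul_rpow_of_le_of_le hA hθ₀ hcoeff hk₁ hkm₁ hk₂ hkm₂
  refine ⟨hX, hY, hZ, ?_⟩
  have hn := rpow_neg_half_mul_rpow_neg_half_le (Nat.cast_nonneg n₁) (Nat.cast_nonneg n₂) θ
  calc _ ≤ _ := abs_add_three _ _ _
    _ ≤ _ := add_le_add (add_le_add hXle hYle) hZle
    _ ≤ 2 * A * (n₂ : ℝ) ^ (-θ) * T + 2 * A * (n₁ : ℝ) ^ (-θ) * T
        + 4 * A * ((n₁ : ℝ) ^ (-θ) + (n₂ : ℝ) ^ (-θ)) * (S * S) := by gcongr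
    _ = _ := by ring

theorem stmt_7 (θ : ℝ) (hθ : 2 < θ) (a : ℕ → ℕ → ℝ) (A : ℝ) (hA : 0 ≤ A)
    (ha0 : ∀ m₁ m₂ : ℕ, m₁ = 0 ∨ m₂ = 0 → a m₁ m₂ = 0)
    (hsum : Summable fun m : ℕ × ℕ =>
      (((m.1 : ℝ) ^ 2 + (m.2 : ℝ) ^ 2) ^ θ) * (a m.1 m.2) ^ 2)
    (hA2 : (∑' m : ℕ × ℕ, (((m.1 : ℝ) ^ 2 + (m.2 : ℝ) ^ 2) ^ θ) * (a m.1 m.2) ^ 2) = A ^ 2)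
    (n₁ n₂ j₁ j₂ : ℕ) (hn₁ : 1 ≤ n₁) (hn₂ : 1 ≤ n₂)
    (hj₁ : 1 ≤ j₁) (hj₁n : j₁ < n₁) (hj₂ : 1 ≤ j₂) (hj₂n : j₂ < n₂) :
    (Summable fun l₂ : ℕ =>
        |(-1 : ℝ) ^ (l₂ + 1) *
          (a j₁ (2 * (l₂ + 1) * n₂ + j₂) - a j₁ (2 * (l₂ + 1) * n₂ - j₂))|) ∧
    (Summable fun l₁ : ℕ =>
        |(-1 : ℝ) ^ (l₁ + 1) *
          (a (2 * (l₁ + 1) * n₁ + j₁) j₂ - a (2 * (l₁ + 1) * n₁ - j₁) j₂)|) ∧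
    (Summable fun l : ℕ × ℕ =>
        |(-1 : ℝ) ^ ((l.1 + 1) + (l.2 + 1)) *
          (a (2 * (l.1 + 1) * n₁ + j₁) (2 * (l.2 + 1) * n₂ + j₂)
            - a (2 * (l.1 + 1) * n₁ + j₁) (2 * (l.2 + 1) * n₂ - j₂)
            + a (2 * (l.1 + 1) * n₁ - j₁) (2 * (l.2 + 1) * n₂ - j₂)
            - a (2 * (l.1 + 1) * n₁ - j₁) (2 * (l.2 + 1) * n₂ + j₂))|) ∧
    |(∑' l₂ : ℕ, (-1 : ℝ) ^ (l₂ + 1) *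
          (a j₁ (2 * (l₂ + 1) * n₂ + j₂) - a j₁ (2 * (l₂ + 1) * n₂ - j₂)))
      + (∑' l₁ : ℕ, (-1 : ℝ) ^ (l₁ + 1) *
          (a (2 * (l₁ + 1) * n₁ + j₁) j₂ - a (2 * (l₁ + 1) * n₁ - j₁) j₂))
      + ∑' l : ℕ × ℕ, (-1 : ℝ) ^ ((l.1 + 1) + (l.2 + 1)) *
          (a (2 * (l.1 + 1) * n₁ + j₁) (2 * (l.2 + 1) * n₂ + j₂)
            - a (2 * (l.1 + 1) * n₁ + j₁) (2 * (l.2 + 1) * n₂ - j₂)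
            + a (2 * (l.1 + 1) * n₁ - j₁) (2 * (l.2 + 1) * n₂ - j₂)
            - a (2 * (l.1 + 1) * n₁ - j₁) (2 * (l.2 + 1) * n₂ + j₂))|
      ≤ (2 * (∑' l : ℕ, ((l : ℝ) + 1) ^ (-θ))
          + 4 * (∑' l : ℕ, ((l : ℝ) + 1) ^ (-(θ / 2))) ^ 2) *
        ((n₁ : ℝ) ^ (-θ) + (n₂ : ℝ) ^ (-θ)) * A :=
  stmt_7_general θ hθ a A hA hsum hA2 n₁ n₂ j₁ j₂ hj₁n hj₂n
end

section
/- Let n₁, n₂ ≥ 1 and 1 ≤ N₁ < n₁, 1 ≤ N₂ < n₂ be integers. Let (W_{k₁,k₂})_{1 ≤ k₁ ≤ n₁, 1 ≤ k₂ ≤ n₂} be mutually independent random variables on a probability space, each with the standard normal distribution N(0,1), and let ε_{k₁,k₂} be real numbers with |ε_{k₁,k₂}| ≤ ε_max. Then E[ ∑_{j₁=1}^{N₁} ∑_{j₂=1}^{N₂} ( (π²/(n₁n₂)) ∑_{k₁=1}^{n₁} ∑_{k₂=1}^{n₂} ε_{k₁,k₂} W_{k₁,k₂} ξ_{j₁,j₂}(x_{k₁,k₂})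 )² ] ≤ π² N₁ N₂ ε_max² / (n₁ n₂). -/
/-!
Expanding the square, independence and `E W² = 1` give, for each mode `(j₁, j₂)`, the second
moment `(π²/(n₁n₂))² ∑ₖ ε_k² ξ_{j₁,j₂}(x_k)² ≤ (π²/(n₁n₂))² ε_max² ∑ₖ ξ_{j₁,j₂}(x_k)²`. For
`0 < j < n` the midpoint rule integrates `sin² (j x)` exactly, `∑ₖ sin² (j x_k) = n/2`, because
`∑_{k<n} cos ((2k+1)θ) = sin (2nθ) / (2 sin θ)` vanishes at `θ = jπ/n`; hence
`∑ₖ ξ_{j₁,j₂}(x_k)² = n₁n₂/π²` and each of the `N₁N₂` modes contributes at most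
`π² ε_max² / (n₁n₂)`.
-/

open Real MeasureTheory ProbabilityTheory

theorem two_mul_sin_mul_sum_range_cos_odd (θ : ℝ) (n : ℕ) :
    2 * sin θ * ∑ k ∈ Finset.range n, cos ((2 * k + 1) * θ) = sin (2 * n * θ) := by
  induction n with
  | zero => simp
  | succ n ih =>
    rw [Finset.sum_range_succ, mul_add, ih]
    have h₁ : 2 * (n : ℝ) * θ = (2 * n + 1) * θ - θ := by ring
    have h₂ : 2 * ((n + 1 : ℕ) : ℝ) * θ = (2 * n + 1) * θ + θ := by push_cast; ring
    rw [h₁, h₂, sin_sub, sin_add]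
    ring

theorem sum_range_cos_odd_mul_pi_div_eq_zero {n j : ℕ} (hj : 0 < j) (hjn : j < n) :
    ∑ k ∈ Finset.range n, cos ((2 * k + 1) * (j * π / n)) = 0 := by
  have hn : (0 : ℝ) < n := by exact_mod_cast hj.trans hjn
  have hsin : sin (j * π / n) ≠ 0 := by
    refine (sin_pos_of_pos_of_lt_pi (by positivity) ?_).ne'
    rw [div_lt_iff₀ hn]
    exact mul_lt_mul_of_pos_right (by exact_mod_cast hjn) pi_pos |>.trans_eq (mul_comm _ _)
  have h := two_mul_sin_mul_sum_range_cos_odd (j * π / n) n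
  rw [show 2 * (n : ℝ) * (j * π / n) = (2 * j : ℕ) * π by field_simp; push_cast; ring,
    sin_nat_mul_pi] at h
  simpa [hsin] using h

theorem sum_sin_sq_mul_gridPt {n j : ℕ} (hj : 0 < j) (hjn : j < n) :
    ∑ k : Fin n, sin (j * gridPt n (k.val + 1)) ^ 2 = n / 2 := by
  have hn : (n : ℝ) ≠ 0 := by have := hj.trans hjn; positivity
  have hsq (k : ℕ) :
      sin (j * gridPt n (k + 1)) ^ 2 = 1 / 2 - cos ((2 * k + 1) * (j * π / n)) / 2 := by
    rw [sin_sq_eq_half_sub, gridPt]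
    congr 3
    push_cast
    field_simp
    ring
  simp only [hsq, Finset.sum_sub_distrib, ← Finset.sum_div,
    Fin.sum_univ_eq_sum_range (fun k => cos ((2 * (k : ℝ) + 1) * (j * π / n))),
    sum_range_cos_odd_mul_pi_div_eq_zero hj hjn]
  simp

theorem sum_xi2_gridPt_sq {n₁ n₂ j₁ j₂ : ℕ} (hj₁ : 0 < j₁) (hj₁n : j₁ < n₁) (hj₂ : 0 < j₂)
    (hj₂n : j₂ < n₂) :
    ∑ k : Fin n₁ × Fin n₂, xi2 j₁ j₂ (gridPt n₁ (k.1.val + 1)) (gridPt n₂ (k.2.val + 1)) ^ 2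
      = n₁ * n₂ / π ^ 2 := by
  simp only [xi2, mul_pow, Fintype.sum_prod_type, ← Finset.mul_sum, ← Finset.sum_mul,
    sum_sin_sq_mul_gridPt hj₁ hj₁n, sum_sin_sq_mul_gridPt hj₂ hj₂n]
  field_simp

section Gaussian

variable {Ω : Type*} {mΩ : MeasurableSpace Ω} {μ : Measure Ω}

theorem memLp_of_map_eq_gaussianReal {X : Ω → ℝ} (hX : AEMeasurable X μ) {m : ℝ} {v : NNReal}
    (hXμ : μ.map X = gaussianReal m v) (p : ENNReal) (hp : p ≠ ⊤) : MemLp X p μ := by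
  have h := memLp_id_gaussianReal' (μ := m) (v := v) p hp
  rwa [← hXμ, memLp_map_measure_iff aestronglyMeasurable_id hX] at h

theorem integral_eq_of_map_eq_gaussianReal {X : Ω → ℝ} (hX : AEMeasurable X μ) {m : ℝ}
    {v : NNReal} (hXμ : μ.map X = gaussianReal m v) : ∫ ω, X ω ∂μ = m := by
  rw [← integral_id_gaussianReal (μ := m) (v := v), ← hXμ,
    integral_map (f := fun x => x) hX aestronglyMeasurable_id]

theorem variance_eq_of_map_eq_gaussianReal {X : Ω → ℝ} (hX : AEMeasurable X μ) {m : ℝ}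
    {v : NNReal} (hXμ : μ.map X = gaussianReal m v) : Var[X; μ] = v := by
  rw [← variance_id_map hX, hXμ, variance_id_gaussianReal]

theorem integral_sq_sum_mul_of_iIndepFun [IsFiniteMeasure μ] {ι : Type*} [Fintype ι]
    {X : ι → Ω → ℝ} (hX : iIndepFun X μ) (hXL2 : ∀ k, MemLp (X k) 2 μ)
    (hXmean : ∀ k, ∫ ω, X k ω ∂μ = 0)
    (a : ι → ℝ) :
    ∫ ω, (∑ k, a k * X k ω) ^ 2 ∂μ = ∑ k, a k ^ 2 * Var[X k; μ] := by
  have haXL2 (k : ι) : MemLp (fun ω => a k * X k ω) 2 μ := (hXL2 k).const_mul (a k)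
  have hmean : ∫ ω, ∑ k, a k * X k ω ∂μ = 0 := by
    simp [integral_finsetSum _ fun k _ => ((hXL2 k).integrable one_le_two).const_mul (a k),
      integral_const_mul, hXmean]
  have hsum : (fun ω => ∑ k, a k * X k ω) = ∑ k, fun ω => a k * X k ω := by
    ext ω; simp
  rw [← variance_of_integral_eq_zero (memLp_finsetSum _ fun k _ => haXL2 k).aemeasurable hmean,
    hsum, IndepFun.variance_sum (fun k _ => haXL2 k) fun i _ j _ hij =>
      (hX.indepFun hij).comp (measurable_const_mul (a i)) (measurable_const_mul (a j))]
  simp [variance_const_mul]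

variable {ι : Type*} [Fintype ι] {W : ι → Ω → ℝ}

theorem integrable_sq_const_mul_sum_mul_of_map_eq_gaussianReal
    (hWmeas : ∀ k, Measurable (W k)) (hWgauss : ∀ k, μ.map (W k) = gaussianReal 0 1)
    (c : ℝ) (ε b : ι → ℝ) :
    Integrable (fun ω => (c * ∑ k, ε k * W k ω * b k) ^ 2) μ :=
  ((memLp_finsetSum _ fun k _ => ((memLp_of_map_eq_gaussianReal (hWmeas k).aemeasurable
    (hWgauss k) 2 ENNReal.ofNat_ne_top).const_mul (ε k)).mul_const (b k)).const_mul c).integrable_sq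

theorem integral_sq_const_mul_sum_mul_le_of_map_eq_gaussianReal [IsFiniteMeasure μ]
    (hWmeas : ∀ k, Measurable (W k)) (hWindep : iIndepFun W μ)
    (hWgauss : ∀ k, μ.map (W k) = gaussianReal 0 1)
    (c : ℝ) (ε b : ι → ℝ) {εmax : ℝ} (hε : ∀ k, |ε k| ≤ εmax) :
    ∫ ω, (c * ∑ k, ε k * W k ω * b k) ^ 2 ∂μ ≤ c ^ 2 * εmax ^ 2 * ∑ k, b k ^ 2 := by
  have hform (ω : Ω) : c * ∑ k, ε k * W k ω * b k = ∑ k, c * ε k * b k * W k ω := by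
    rw [Finset.mul_sum]
    exact Finset.sum_congr rfl fun k _ => by ring
  have hε_sq (k : ι) : ε k ^ 2 ≤ εmax ^ 2 := sq_le_sq.mpr ((hε k).trans (le_abs_self _))
  calc ∫ ω, (c * ∑ k, ε k * W k ω * b k) ^ 2 ∂μ
      = ∑ k, (c * ε k * b k) ^ 2 := by
        simp only [hform]
        rw [integral_sq_sum_mul_of_iIndepFun hWindep
          (fun k => memLp_of_map_eq_gaussianReal (hWmeas k).aemeasurable (hWgauss k) 2
            ENNReal.ofNat_ne_top)
          (fun k => integral_eq_of_map_eq_gaussianReal (hWmeas k).aemeasurable (hWgauss k))]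
        simp [variance_eq_of_map_eq_gaussianReal (hWmeas _).aemeasurable (hWgauss _)]
    _ ≤ ∑ k, c ^ 2 * εmax ^ 2 * b k ^ 2 := Finset.sum_le_sum fun k _ => by
        rw [mul_pow, mul_pow]
        gcongr c ^ 2 * ?_ * _
        exact hε_sq k
    _ = c ^ 2 * εmax ^ 2 * ∑ k, b k ^ 2 := by rw [Finset.mul_sum]

end Gaussian

theorem stmt_9_general (n₁ n₂ N₁ N₂ : ℕ)
    (hN₁n : N₁ < n₁) (hN₂n : N₂ < n₂)
    {Ω : Type*} [MeasureSpace Ω] [IsProbabilityMeasure (ℙ : Measure Ω)]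
    (W : Fin n₁ × Fin n₂ → Ω → ℝ)
    (hWmeas : ∀ k, Measurable (W k))
    (hWindep : iIndepFun W ℙ)
    (hWgauss : ∀ k, Measure.map (W k) ℙ = gaussianReal 0 1)
    (ε : Fin n₁ × Fin n₂ → ℝ) (εmax : ℝ) (hε : ∀ k, |ε k| ≤ εmax) :
    ∫ ω, ∑ j₁ ∈ Finset.Icc 1 N₁, ∑ j₂ ∈ Finset.Icc 1 N₂,
        ((π ^ 2 / (n₁ * n₂)) * ∑ k : Fin n₁ × Fin n₂,
            ε k * W k ω *
              xi2 j₁ j₂ (gridPt n₁ (k.1.val + 1)) (gridPt n₂ (k.2.val + 1))) ^ 2 ∂ℙ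
      ≤ π ^ 2 * N₁ * N₂ * εmax ^ 2 / (n₁ * n₂) := by
  have hn₁ : (n₁ : ℝ) ≠ 0 := by have := hN₁n.pos; positivity
  have hn₂ : (n₂ : ℝ) ≠ 0 := by have := hN₂n.pos; positivity
  have hmode (j₁ : ℕ) (hj₁ : j₁ ∈ Finset.Icc 1 N₁) (j₂ : ℕ) (hj₂ : j₂ ∈ Finset.Icc 1 N₂) :
      ∫ ω, ((π ^ 2 / (n₁ * n₂)) * ∑ k : Fin n₁ × Fin n₂, ε k * W k ω *
        xi2 j₁ j₂ (gridPt n₁ (k.1.val + 1)) (gridPt n₂ (k.2.val + 1))) ^ 2 ∂ℙ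
        ≤ π ^ 2 * εmax ^ 2 / (n₁ * n₂) := by
    rw [Finset.mem_Icc] at hj₁ hj₂
    refine (integral_sq_const_mul_sum_mul_le_of_map_eq_gaussianReal hWmeas hWindep hWgauss
      _ ε _ hε).trans_eq ?_
    rw [sum_xi2_gridPt_sq hj₁.1 (hj₁.2.trans_lt hN₁n) hj₂.1 (hj₂.2.trans_lt hN₂n)]
    field_simp
  have hint (j₁ j₂ : ℕ) := integrable_sq_const_mul_sum_mul_of_map_eq_gaussianReal hWmeas hWgauss
    (π ^ 2 / (n₁ * n₂)) ε fun k => xi2 j₁ j₂ (gridPt n₁ (k.1.val + 1)) (gridPt n₂ (k.2.val + 1))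
  rw [integral_finsetSum _ fun j₁ _ => integrable_finsetSum _ fun j₂ _ => hint j₁ j₂,
    Finset.sum_congr rfl fun j₁ _ => integral_finsetSum _ fun j₂ _ => hint j₁ j₂]
  calc _ ≤ ∑ j₁ ∈ Finset.Icc 1 N₁, ∑ j₂ ∈ Finset.Icc 1 N₂, π ^ 2 * εmax ^ 2 / (n₁ * n₂) :=
        Finset.sum_le_sum fun j₁ hj₁ => Finset.sum_le_sum fun j₂ hj₂ => hmode j₁ hj₁ j₂ hj₂
    _ = π ^ 2 * N₁ * N₂ * εmax ^ 2 / (n₁ * n₂) := by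
        simp only [Finset.sum_const, Nat.card_Icc, Nat.add_sub_cancel, nsmul_eq_mul]
        ring

theorem stmt_9 (n₁ n₂ N₁ N₂ : ℕ)
    (hN₁ : 1 ≤ N₁) (hN₁n : N₁ < n₁) (hN₂ : 1 ≤ N₂) (hN₂n : N₂ < n₂)
    {Ω : Type*} [MeasureSpace Ω] [IsProbabilityMeasure (ℙ : Measure Ω)]
    (W : Fin n₁ × Fin n₂ → Ω → ℝ)
    (hWmeas : ∀ k, Measurable (W k))
    (hWindep : iIndepFun W ℙ)
    (hWgauss : ∀ k, Measure.map (W k) ℙ = gaussianReal 0 1)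
    (ε : Fin n₁ × Fin n₂ → ℝ) (εmax : ℝ) (hε : ∀ k, |ε k| ≤ εmax) :
    ∫ ω, ∑ j₁ ∈ Finset.Icc 1 N₁, ∑ j₂ ∈ Finset.Icc 1 N₂,
        ((π ^ 2 / (n₁ * n₂)) * ∑ k : Fin n₁ × Fin n₂,
            ε k * W k ω *
              xi2 j₁ j₂ (gridPt n₁ (k.1.val + 1)) (gridPt n₂ (k.2.val + 1))) ^ 2 ∂ℙ
      ≤ π ^ 2 * N₁ * N₂ * εmax ^ 2 / (n₁ * n₂) :=
  stmt_9_general n₁ n₂ N₁ N₂ hN₁n hN₂n W hWmeas hWindep hWgauss ε εmax hε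
end

section
/- Let 0 < α < 1, T > 0, and M₁, M₂ > 0 with M₁/(1+z) ≤ E_{α,1}(−z) ≤ M₂/(1+z) for all z ≥ 0, and let ϑ > 0. Then for every t ∈ [0,T] and every family c = (c_j)_{j∈J_d} of reals with ∑_{j∈J_d} λ_j c_j² < ∞: ∑_{j∈J_d} ( ϑ · E_{α,1}(−λ_j t^α) / (ϑ + E_{α,1}(−λ_j T^α)) )² c_j² ≤ (ϑ M₂² (1+T^α)/(4M₁)) ∑_{j∈J_d} λ_j c_j². -/
/-!
Termwise: since `(ϑ + b)² ≥ 4ϑb` (AM–GM), `(ϑ a / (ϑ + b))² ≤ ϑ a² / (4b)`. With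
`a = E_{α,1}(-λ t^α) ≤ M₂` and `b = E_{α,1}(-λ T^α) ≥ M₁ / (1 + λ T^α)` this is at most
`ϑ M₂² (1 + λ T^α) / (4 M₁)`, and `1 + λ T^α ≤ λ (1 + T^α)` because `λ ≥ 1`.
Multiplying by `c_j²` and summing gives the claim.
-/

lemma one_le_lamMulti {d : ℕ} (hd : 1 ≤ d) (j : Fin d → ℕ+) : 1 ≤ lamMulti j := by
  have hterm : ∀ i, (1 : ℝ) ≤ ((j i : ℕ) : ℝ) ^ 2 := fun i =>
    one_le_pow₀ (by exact_mod_cast (j i).pos)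
  calc (1 : ℝ) ≤ d := by exact_mod_cast hd
    _ = ∑ _i : Fin d, (1 : ℝ) := by simp
    _ ≤ lamMulti j := Finset.sum_le_sum fun i _ => hterm i

lemma sq_mul_div_add_le {ϑ a b M : ℝ} (hϑ : 0 < ϑ) (ha : 0 ≤ a) (haM : a ≤ M) (hb : 0 < b) :
    (ϑ * a / (ϑ + b)) ^ 2 ≤ ϑ * M ^ 2 / (4 * b) := by
  have hamgm : 4 * ϑ * b ≤ (ϑ + b) ^ 2 := by nlinarith [sq_nonneg (ϑ - b)]
  have hnum : (ϑ * a) ^ 2 ≤ (ϑ * M) ^ 2 := by gcongr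
  calc (ϑ * a / (ϑ + b)) ^ 2 = (ϑ * a) ^ 2 / (ϑ + b) ^ 2 := div_pow _ _ _
    _ ≤ (ϑ * M) ^ 2 / (4 * ϑ * b) := by gcongr
    _ = ϑ * M ^ 2 / (4 * b) := by field_simp

lemma sq_mul_div_add_le_mul_of_bounds {f : ℝ → ℝ} {M₁ M₂ ϑ : ℝ}
    (hM₁ : 0 < M₁) (hM₂ : 0 < M₂) (hϑ : 0 < ϑ)
    (hf : ∀ z : ℝ, 0 ≤ z → M₁ / (1 + z) ≤ f z ∧ f z ≤ M₂ / (1 + z))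
    {z x lam : ℝ} (hz : 0 ≤ z) (hx : 0 ≤ x) (hlam : 1 ≤ lam) :
    (ϑ * f z / (ϑ + f (lam * x))) ^ 2 ≤ ϑ * M₂ ^ 2 * (1 + x) / (4 * M₁) * lam := by
  have hlx : 0 ≤ lam * x := mul_nonneg (zero_le_one.trans hlam) hx
  obtain ⟨hfz_lower, hfz_upper⟩ := hf z hz
  obtain ⟨hb_lower, -⟩ := hf (lam * x) hlx
  have hfz_pos : 0 < f z := (div_pos hM₁ (by linarith)).trans_le hfz_lower
  have hb_pos : 0 < f (lam * x) := (div_pos hM₁ (by linarith)).trans_le hb_lower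
  have hfz_le : f z ≤ M₂ :=
    hfz_upper.trans (div_le_self hM₂.le (by linarith))
  have hlin : 1 + lam * x ≤ lam * (1 + x) := by nlinarith
  calc (ϑ * f z / (ϑ + f (lam * x))) ^ 2
      ≤ ϑ * M₂ ^ 2 / (4 * f (lam * x)) := sq_mul_div_add_le hϑ hfz_pos.le hfz_le hb_pos
    _ ≤ ϑ * M₂ ^ 2 / (4 * (M₁ / (1 + lam * x))) := by gcongr
    _ = ϑ * M₂ ^ 2 * (1 + lam * x) / (4 * M₁) := by field_simp
    _ ≤ ϑ * M₂ ^ 2 * (lam * (1 + x)) / (4 * M₁) := by gcongr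
    _ = ϑ * M₂ ^ 2 * (1 + x) / (4 * M₁) * lam := by ring

theorem stmt_17_general (d : ℕ) (hd : 1 ≤ d) (α T M₁ M₂ ϑ : ℝ)
    (hM₁ : 0 < M₁) (hM₂ : 0 < M₂) (hϑ : 0 < ϑ)
    (hML : ∀ z : ℝ, 0 ≤ z →
      M₁ / (1 + z) ≤ mittagLeffler α 1 (-z) ∧ mittagLeffler α 1 (-z) ≤ M₂ / (1 + z))
    (t : ℝ) (ht : t ∈ Set.Icc 0 T)
    (c : (Fin d → ℕ+) → ℝ) (hc : Summable fun j => lamMulti j * (c j) ^ 2) :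
    ∑' j : Fin d → ℕ+,
        (ϑ * mittagLeffler α 1 (-(lamMulti j * t ^ α)) /
          (ϑ + mittagLeffler α 1 (-(lamMulti j * T ^ α)))) ^ 2 * (c j) ^ 2
      ≤ (ϑ * M₂ ^ 2 * (1 + T ^ α) / (4 * M₁)) *
          ∑' j : Fin d → ℕ+, lamMulti j * (c j) ^ 2 := by
  set C := ϑ * M₂ ^ 2 * (1 + T ^ α) / (4 * M₁)
  have hT : 0 ≤ T := ht.1.trans ht.2
  have hterm : ∀ j : Fin d → ℕ+,
      (ϑ * mittagLeffler α 1 (-(lamMulti j * t ^ α)) /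
        (ϑ + mittagLeffler α 1 (-(lamMulti j * T ^ α)))) ^ 2 * (c j) ^ 2
        ≤ C * (lamMulti j * (c j) ^ 2) := fun j => by
    have hlam := one_le_lamMulti hd j
    have hbound := sq_mul_div_add_le_mul_of_bounds (f := fun z => mittagLeffler α 1 (-z))
      hM₁ hM₂ hϑ hML (mul_nonneg (zero_le_one.trans hlam) (Real.rpow_nonneg ht.1 α))
      (Real.rpow_nonneg hT α) hlam
    calc _ ≤ C * lamMulti j * (c j) ^ 2 := by gcongr
      _ = C * (lamMulti j * (c j) ^ 2) := mul_assoc _ _ _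
  have hsum : Summable fun j => C * (lamMulti j * (c j) ^ 2) := hc.mul_left C
  rw [← tsum_mul_left]
  exact (hsum.of_nonneg_of_le (fun j => by positivity) hterm).tsum_le_tsum hterm hsum

theorem stmt_17 (d : ℕ) (hd : 1 ≤ d) (α T M₁ M₂ ϑ : ℝ)
    (hα0 : 0 < α) (hα1 : α < 1) (hT : 0 < T) (hM₁ : 0 < M₁) (hM₂ : 0 < M₂) (hϑ : 0 < ϑ)
    (hML : ∀ z : ℝ, 0 ≤ z →
      M₁ / (1 + z) ≤ mittagLeffler α 1 (-z) ∧ mittagLeffler α 1 (-z) ≤ M₂ / (1 + z))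
    (t : ℝ) (ht : t ∈ Set.Icc 0 T)
    (c : (Fin d → ℕ+) → ℝ) (hc : Summable fun j => lamMulti j * (c j) ^ 2) :
    ∑' j : Fin d → ℕ+,
        (ϑ * mittagLeffler α 1 (-(lamMulti j * t ^ α)) /
          (ϑ + mittagLeffler α 1 (-(lamMulti j * T ^ α)))) ^ 2 * (c j) ^ 2
      ≤ (ϑ * M₂ ^ 2 * (1 + T ^ α) / (4 * M₁)) *
          ∑' j : Fin d → ℕ+, lamMulti j * (c j) ^ 2 :=
  stmt_17_general d hd α T M₁ M₂ ϑ hM₁ hM₂ hϑ hML t ht c hc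
end
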